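/- arXiv:1402.6510 — 3 statements merged into one kernel-verified Lean document; each statement's English description precedes it below -/
import Mathlib

section
/- Let φ be a right invariant fuzzy quasi-order on a fuzzy automaton A. Then for every word w ∈ X*, φ_w = σ_w ∘ φ, where φ_w is defined by φ_ε = σ ∘ φ, φ_{ux} = φ_u ∘ δ_x ∘ φ, and σ_w = σ ∘ δ_w. -/
namespace FuzzyAut

/-- Composition of fuzzy relations. -/
def rcomp {L : Type*} [CompleteLattice L] [CommMonoid L] {A B C : Type*}
    (α : A → B → L) (β : B → C → L) : A → C → L :=
  fun a c => ⨆ b, α a b * β b c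

/-- Composition of a fuzzy set with a fuzzy relation. -/
def scomp {L : Type*} [CompleteLattice L] [CommMonoid L] {A B : Type*}
    (f : A → L) (α : A → B → L) : B → L :=
  fun b => ⨆ a, f a * α a b

/-- Composition of a fuzzy relation with a fuzzy set. -/
def rscomp {L : Type*} [CompleteLattice L] [CommMonoid L] {A B : Type*}
    (α : A → B → L) (g : B → L) : A → L :=
  fun a => ⨆ b, α a b * g b

/-- Scalar composition of two fuzzy sets. -/
def sscomp {L : Type*} [CompleteLattice L] [CommMonoid L] {A : Type*}
    (f g : A → L) : L := ⨆ a, f a * g a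

/-- The crisp equality fuzzy relation. -/
def eqRel {L : Type*} [CompleteLattice L] [CommMonoid L] (A : Type*) : A → A → L :=
  fun a b => ⨆ _ : a = b, (1 : L)

/-- The fuzzy transition relation extended to words. -/
def relWord {L : Type*} [CompleteLattice L] [CommMonoid L] {A X : Type*}
    (δ : X → A → A → L) : List X → A → A → L
  | [] => eqRel A
  | x :: u => rcomp (δ x) (relWord δ u)

/-- The family φ_u : φ_ε = σ∘φ, φ_{ux} = φ_u∘δ_x∘φ. -/
def phiFam {L : Type*} [CompleteLattice L] [CommMonoid L] {A X : Type*}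
    (σ : A → L) (δ : X → A → A → L) (φ : A → A → L) (u : List X) : A → L :=
  u.foldl (fun f x => scomp (scomp f (δ x)) φ) (scomp σ φ)

/-- The family ψ^u : ψ^ε = ψ∘τ, ψ^{xu} = ψ∘δ_x∘ψ^u. -/
def psiFam {L : Type*} [CompleteLattice L] [CommMonoid L] {A X : Type*}
    (τ : A → L) (δ : X → A → A → L) (ψ : A → A → L) : List X → A → L
  | [] => rscomp ψ τ
  | x :: u => rscomp ψ (rscomp (δ x) (psiFam τ δ ψ u))

/-- Reflexivity of a fuzzy relation. -/
def IsRefl {L : Type*} [CompleteLattice L] [CommMonoid L] {A : Type*}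
    (φ : A → A → L) : Prop := ∀ a, φ a a = 1

/-- Transitivity of a fuzzy relation. -/
def IsTrans {L : Type*} [CompleteLattice L] [CommMonoid L] {A : Type*}
    (φ : A → A → L) : Prop := ∀ a b c, φ a b * φ b c ≤ φ a c

section Aux

variable {L : Type*} [CompleteLattice L] [CommMonoid L]
variable (res : L → L → L) (hres : ∀ x y z : L, x * y ≤ z ↔ x ≤ res y z)

include hres

lemma aux_mul_mono {a b : L} (c : L) (h : a ≤ b) : a * c ≤ b * c :=
  (hres a c (b * c)).mpr (h.trans ((hres b c (b * c)).mp le_rfl))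

lemma aux_mul_mono' {a b : L} (c : L) (h : a ≤ b) : c * a ≤ c * b := by
  rw [mul_comm c a, mul_comm c b]; exact aux_mul_mono res hres c h

lemma aux_iSup_mul {ι : Sort*} (f : ι → L) (a : L) :
    (⨆ i, f i) * a = ⨆ i, f i * a := by
  apply le_antisymm
  · exact (hres _ _ _).mpr (iSup_le fun i => (hres _ _ _).mp (le_iSup (fun i => f i * a) i))
  · exact iSup_le fun i => aux_mul_mono res hres a (le_iSup f i)

lemma aux_mul_iSup {ι : Sort*} (a : L) (f : ι → L) :
    a * (⨆ i, f i) = ⨆ i, a * f i := by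
  rw [mul_comm]; rw [aux_iSup_mul res hres]
  exact iSup_congr fun i => mul_comm _ _

lemma aux_scomp_assoc {A B C : Type*} (f : A → L) (α : A → B → L) (β : B → C → L) :
    scomp (scomp f α) β = scomp f (rcomp α β) := by
  funext c
  simp only [scomp, rcomp]
  simp only [aux_iSup_mul res hres, aux_mul_iSup res hres]
  rw [iSup_comm]
  exact iSup_congr fun a => iSup_congr fun b => (mul_assoc _ _ _)

lemma aux_rcomp_assoc {A B C D : Type*} (α : A → B → L) (β : B → C → L) (γ : C → D → L) :
    rcomp (rcomp α β) γ = rcomp α (rcomp β γ) := by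
  funext a d
  simp only [rcomp]
  simp only [aux_iSup_mul res hres, aux_mul_iSup res hres]
  rw [iSup_comm]
  exact iSup_congr fun b => iSup_congr fun c => (mul_assoc _ _ _)

lemma aux_scomp_eqRel {A : Type*} (f : A → L) : scomp f (eqRel A) = f := by
  funext b
  simp only [scomp, eqRel, aux_mul_iSup res hres, mul_one]
  exact iSup_iSup_eq_left

lemma aux_rcomp_eqRel {A B : Type*} (α : A → B → L) : rcomp α (eqRel B) = α := by
  funext a b
  simp only [rcomp, eqRel, aux_mul_iSup res hres, mul_one]
  exact iSup_iSup_eq_left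

lemma aux_relWord_append {A X : Type*} (δ : X → A → A → L) (u : List X) (x : X) :
    relWord δ (u ++ [x]) = rcomp (relWord δ u) (δ x) := by
  induction u with
  | nil =>
    show rcomp (δ x) (eqRel A) = rcomp (eqRel A) (δ x)
    rw [aux_rcomp_eqRel res hres]
    funext a b
    simp only [rcomp, eqRel, aux_iSup_mul res hres, one_mul]
    exact (iSup_iSup_eq_right (f := fun c _ => δ x c b)).symm
  | cons y u ih =>
    show rcomp (δ y) (relWord δ (u ++ [x])) = _
    rw [ih]
    exact (aux_rcomp_assoc res hres _ _ _).symm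

end Aux

/-- for a right invariant fuzzy quasi-order φ,
φ_w = σ_w ∘ φ for every word w. -/
theorem stmt8 {L : Type*} [CompleteLattice L] [CommMonoid L] (res : L → L → L) (hres : ∀ x y z : L, x * y ≤ z ↔ x ≤ res y z) (htop : ∀ x : L, x ≤ 1)
    {A X : Type*} (σ : A → L) (δ : X → A → A → L) (τ : A → L)
    (φ : A → A → L) (hrefl : IsRefl φ) (htrans : IsTrans φ)
    (hd : ∀ x : X, rcomp φ (δ x) ≤ rcomp (δ x) φ)
    (ht : rscomp φ τ ≤ τ) :
    ∀ w : List X, phiFam σ δ φ w = scomp (scomp σ (relWord δ w)) φ := by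
  -- key: φ ∘ (δ x ∘ φ) = δ x ∘ φ
  have hkey : ∀ x : X, rcomp φ (rcomp (δ x) φ) = rcomp (δ x) φ := by
    intro x
    apply le_antisymm
    · rw [← aux_rcomp_assoc res hres]
      calc rcomp (rcomp φ (δ x)) φ
          ≤ rcomp (rcomp (δ x) φ) φ := by
            intro a b
            show (⨆ c, rcomp φ (δ x) a c * φ c b) ≤ ⨆ c, rcomp (δ x) φ a c * φ c b
            exact iSup_le fun c =>
              (aux_mul_mono res hres _ (hd x a c)).trans
                (le_iSup (fun c => rcomp (δ x) φ a c * φ c b) c)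
        _ = rcomp (δ x) (rcomp φ φ) := aux_rcomp_assoc res hres _ _ _
        _ ≤ rcomp (δ x) φ := by
            intro a b
            show (⨆ c, δ x a c * rcomp φ φ c b) ≤ ⨆ c, δ x a c * φ c b
            refine iSup_le fun c => ?_
            refine (aux_mul_mono' res hres _ ?_).trans (le_iSup (fun c => δ x a c * φ c b) c)
            exact iSup_le fun d => htrans c d b
    · intro a b
      have : φ a a * rcomp (δ x) φ a b ≤ rcomp φ (rcomp (δ x) φ) a b :=
        le_iSup (fun c => φ a c * rcomp (δ x) φ c b) a
      rwa [hrefl a, one_mul] at this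
  intro w
  induction w using List.reverseRecOn with
  | nil =>
    show scomp σ φ = scomp (scomp σ (eqRel A)) φ
    rw [aux_scomp_eqRel res hres]
  | append_singleton u x ih =>
    have hfold : phiFam σ δ φ (u ++ [x]) = scomp (scomp (phiFam σ δ φ u) (δ x)) φ := by
      simp [phiFam, List.foldl_append]
    rw [hfold, ih, aux_relWord_append res hres,
      aux_scomp_assoc res hres (scomp (scomp σ (relWord δ u)) φ),
      aux_scomp_assoc res hres (scomp σ (relWord δ u)), hkey,
      ← aux_scomp_assoc res hres (scomp σ (relWord δ u)),
      aux_scomp_assoc res hres σ (relWord δ u) (δ x)]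
end FuzzyAut
end

section
/- Let φ be a weakly right invariant fuzzy quasi-order on a fuzzy automaton A, and let B = A/φ be the afterset fuzzy automaton. Then for every word u ∈ X* and state a ∈ A, σ^B_u(aφ) = φ_u(a), where σ^B_u = σ^B ∘ δ^B_u and φ_u is defined by φ_ε = σ ∘ φ, φ_{ux} = φ_u ∘ δ_x ∘ φ. -/
namespace FuzzyAut

/-- The set of aftersets of a fuzzy relation φ (states of the afterset automaton A/φ). -/
def Aft {L : Type*} [CompleteLattice L] [CommMonoid L] {A : Type*} (φ : A → A → L) :=
  {f : A → L // ∃ a : A, f = fun b => φ a b}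

/-- The afterset of a state. -/
def aft {L : Type*} [CompleteLattice L] [CommMonoid L] {A : Type*} (φ : A → A → L)
    (a : A) : Aft φ := ⟨fun b => φ a b, a, rfl⟩

/-- A representative of an afterset. -/
noncomputable def rep {L : Type*} [CompleteLattice L] [CommMonoid L] {A : Type*}
    {φ : A → A → L} (s : Aft φ) : A := s.2.choose

/-- The fuzzy set of initial states of the afterset automaton A/φ : σ^B(aφ) = (σ∘φ)(a). -/
noncomputable def aftInit {L : Type*} [CompleteLattice L] [CommMonoid L] {A : Type*}
    (σ : A → L) (φ : A → A → L) : Aft φ → L := fun s => scomp σ φ (rep s)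

/-- Transitions of the afterset automaton A/φ : δ^B_x(aφ,bφ) = (φ∘δ_x∘φ)(a,b). -/
noncomputable def aftTrans {L : Type*} [CompleteLattice L] [CommMonoid L] {A X : Type*}
    (δ : X → A → A → L) (φ : A → A → L) : X → Aft φ → Aft φ → L :=
  fun x s t => rcomp (rcomp φ (δ x)) φ (rep s) (rep t)

/-- Terminal fuzzy set of the afterset automaton A/φ : τ^B(aφ) = (φ∘τ)(a). -/
noncomputable def aftTerm {L : Type*} [CompleteLattice L] [CommMonoid L] {A : Type*}
    (τ : A → L) (φ : A → A → L) : Aft φ → L := fun s => rscomp φ τ (rep s)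


section Aux

variable {L : Type*} [CompleteLattice L] [CommMonoid L] {res : L → L → L}

lemma fmul_mono_r (hres : ∀ x y z : L, x * y ≤ z ↔ x ≤ res y z)
    {a b : L} (h : a ≤ b) (x : L) : x * a ≤ x * b := by
  rw [mul_comm x a]
  exact (hres a x (x * b)).2 (h.trans ((hres b x (x * b)).1 (by rw [mul_comm])))

lemma fmul_iSup (hres : ∀ x y z : L, x * y ≤ z ↔ x ≤ res y z)
    {ι : Sort*} (x : L) (f : ι → L) : x * (⨆ i, f i) = ⨆ i, x * f i := by
  refine le_antisymm ?_ (iSup_le fun i => fmul_mono_r hres (le_iSup f i) x)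
  rw [mul_comm, hres]
  exact iSup_le fun i => (hres _ _ _).1 (by rw [mul_comm]; exact le_iSup (fun i => x * f i) i)

lemma fiSup_mul (hres : ∀ x y z : L, x * y ≤ z ↔ x ≤ res y z)
    {ι : Sort*} (x : L) (f : ι → L) : (⨆ i, f i) * x = ⨆ i, f i * x := by
  rw [mul_comm, fmul_iSup hres]
  simp [mul_comm]

lemma scomp_assoc (hres : ∀ x y z : L, x * y ≤ z ↔ x ≤ res y z)
    {A B C : Type*} (f : A → L) (α : A → B → L) (β : B → C → L) :
    scomp (scomp f α) β = scomp f (rcomp α β) := by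
  funext c
  simp only [scomp, rcomp, fiSup_mul hres, fmul_iSup hres]
  rw [iSup_comm]
  simp [mul_assoc]

lemma rcomp_self {A : Type*} {φ : A → A → L} (hrefl : IsRefl φ) (htrans : IsTrans φ) :
    rcomp φ φ = φ := by
  funext a c
  refine le_antisymm (iSup_le fun b => htrans a b c) ?_
  have : φ a a * φ a c ≤ ⨆ b, φ a b * φ b c := le_iSup (fun b => φ a b * φ b c) a
  rwa [hrefl a, one_mul] at this

lemma scomp_phi_idem (hres : ∀ x y z : L, x * y ≤ z ↔ x ≤ res y z)
    {A : Type*} {φ : A → A → L} (hrefl : IsRefl φ) (htrans : IsTrans φ)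
    (f : A → L) : scomp (scomp f φ) φ = scomp f φ := by
  rw [scomp_assoc hres, rcomp_self hrefl htrans]

lemma scomp_eqRel (hres : ∀ x y z : L, x * y ≤ z ↔ x ≤ res y z)
    {A : Type*} (f : A → L) (t : A) : scomp f (eqRel A) t = f t := by
  simp only [scomp, eqRel, fmul_iSup hres, mul_one]
  refine le_antisymm (iSup_le fun s => iSup_le fun h => h ▸ le_rfl) ?_
  exact le_iSup_of_le t (le_iSup_of_le rfl le_rfl)

lemma aft_row {A : Type*} (φ : A → A → L) (a : A) :
    ∀ b, φ (rep (aft φ a)) b = φ a b := by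
  have h := (aft φ a).2.choose_spec
  intro b
  exact (congrFun h b).symm

lemma col_of_row {A : Type*} {φ : A → A → L} (hrefl : IsRefl φ) (htrans : IsTrans φ)
    {c d : A} (h : ∀ b, φ c b = φ d b) : ∀ b, φ b c = φ b d := by
  have hcd : φ c d = 1 := by rw [h]; exact hrefl d
  have hdc : φ d c = 1 := by rw [← h]; exact hrefl c
  intro b
  refine le_antisymm ?_ ?_
  · have := htrans b c d; rwa [hcd, mul_one] at this
  · have := htrans b d c; rwa [hdc, mul_one] at this

lemma iSup_aft {A : Type*} {φ : A → A → L} (F : Aft φ → L) :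
    (⨆ s, F s) = ⨆ a, F (aft φ a) := by
  refine le_antisymm (iSup_le fun s => ?_) (iSup_le fun a => le_iSup _ _)
  obtain ⟨a, ha⟩ := s.2
  have : s = aft φ a := Subtype.ext ha
  rw [this]
  exact le_iSup (fun a => F (aft φ a)) a

lemma key_lemma (hres : ∀ x y z : L, x * y ≤ z ↔ x ≤ res y z)
    {A X : Type*} (δ : X → A → A → L) (φ : A → A → L)
    (hrefl : IsRefl φ) (htrans : IsTrans φ) :
    ∀ (u : List X) (f : Aft φ → L) (g : A → L),
      (∀ a, f (aft φ a) = g a) → (scomp g φ = g) →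
      ∀ a, scomp f (relWord (aftTrans δ φ) u) (aft φ a)
          = u.foldl (fun h x => scomp (scomp h (δ x)) φ) g a := by
  intro u
  induction u with
  | nil =>
    intro f g hfg _ a
    simp only [relWord, List.foldl_nil]
    rw [scomp_eqRel hres, hfg]
  | cons x u ih =>
    intro f g hfg hg a
    simp only [relWord, List.foldl_cons]
    rw [← scomp_assoc hres]
    refine ih _ _ ?_ (scomp_phi_idem hres hrefl htrans _) a
    intro b
    have step : ∀ c, aftTrans δ φ x (aft φ c) (aft φ b) = rcomp (rcomp φ (δ x)) φ c b := by
      intro c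
      have hrowc := aft_row φ c
      have hcol := col_of_row hrefl htrans (aft_row φ b)
      simp only [aftTrans, rcomp, hrowc, hcol]
    show scomp f (aftTrans δ φ x) (aft φ b) = scomp (scomp g (δ x)) φ b
    have h1 : scomp f (aftTrans δ φ x) (aft φ b)
        = scomp g (rcomp (rcomp φ (δ x)) φ) b := by
      simp only [scomp]
      rw [iSup_aft (fun s => f s * aftTrans δ φ x s (aft φ b))]
      simp only [hfg, step]
    rw [h1, ← scomp_assoc hres, ← scomp_assoc hres, hg]

end Aux

/-- for a weakly right invariant fuzzy quasi-order φ and the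
afterset automaton B = A/φ, σ^B_u(aφ) = φ_u(a) for all u and a. -/
theorem stmt11 {L : Type*} [CompleteLattice L] [CommMonoid L] (res : L → L → L) (hres : ∀ x y z : L, x * y ≤ z ↔ x ≤ res y z) (htop : ∀ x : L, x ≤ 1)
    {A X : Type*} (σ : A → L) (δ : X → A → A → L) (τ : A → L)
    (φ : A → A → L) (hrefl : IsRefl φ) (htrans : IsTrans φ)
    (hwri : ∀ u : List X, rscomp φ (rscomp (relWord δ u) τ) ≤ rscomp (relWord δ u) τ) :
    ∀ (u : List X) (a : A),
      scomp (aftInit σ φ) (relWord (aftTrans δ φ) u) (aft φ a) = phiFam σ δ φ u a := by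
  intro u a
  have hfg : ∀ a, aftInit σ φ (aft φ a) = scomp σ φ a := by
    intro a
    have hcol := col_of_row hrefl htrans (aft_row φ a)
    simp only [aftInit, scomp, hcol]
  exact key_lemma hres δ φ hrefl htrans u (aftInit σ φ) (scomp σ φ) hfg
    (scomp_phi_idem hres hrefl htrans σ) a
end FuzzyAut
end

section
/- Let A be a fuzzy automaton over alphabet X = {x₁,...,x_m} and φ a reflexive weakly right invariant fuzzy relation on A. Define for each u ∈ X* the (m+1)-tuple φ_u^c = (φ_{ux₁},...,φ_{ux_m}, φ_u ∘ τ), the children automaton A_φ^c with states {φ_u^c : u ∈ X*}, transitions φ_u^c ↦ φ_{ux}^c, initial state φ_ε^c, terminal membership φ_u ∘ τ. Then the transition map is well-defined (φ_u^c = φ_v^c implies φ_{ux}^c = φ_{vx}^c for every x ∈ X) and A_φ^c is an accessible crisp-deterministic fuzzy automaton equivalent to A. -/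
namespace FuzzyAut

/-- The child tuple φ_u^c = (φ_{ux₁},…,φ_{ux_m}, φ_u∘τ), encoded as a pair of
the function x ↦ φ_{ux} and the scalar φ_u∘τ. -/
def childTuple {L : Type*} [CompleteLattice L] [CommMonoid L] {A X : Type*}
    (σ : A → L) (δ : X → A → A → L) (φ : A → A → L) (τ : A → L)
    (u : List X) : (X → (A → L)) × L :=
  (fun x => phiFam σ δ φ (u ++ [x]), sscomp (phiFam σ δ φ u) τ)


section Aux

variable {L : Type*} [CompleteLattice L] [CommMonoid L]
variable (res : L → L → L) (hres : ∀ x y z : L, x * y ≤ z ↔ x ≤ res y z)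
include res hres

lemma mul_mono_left (hab : (a : L) ≤ b) (c : L) : a * c ≤ b * c := by
  rw [hres]
  exact le_trans hab ((hres b c (b * c)).mp le_rfl)

lemma mul_mono_right (c : L) (hab : (a : L) ≤ b) : c * a ≤ c * b := by
  rw [mul_comm c a, mul_comm c b]; exact mul_mono_left res hres hab c

lemma iSup_mul' {ι : Sort*} (f : ι → L) (y : L) :
    (⨆ i, f i) * y = ⨆ i, f i * y := by
  apply le_antisymm
  · rw [hres]
    exact iSup_le fun i => (hres _ _ _).mp (le_iSup (fun i => f i * y) i)
  · exact iSup_le fun i => mul_mono_left res hres (le_iSup f i) y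

lemma mul_iSup' {ι : Sort*} (y : L) (f : ι → L) :
    y * (⨆ i, f i) = ⨆ i, y * f i := by
  rw [mul_comm, iSup_mul' res hres]
  simp [mul_comm]

variable {A B C : Type*}

lemma sscomp_rscomp (f : A → L) (α : A → B → L) (g : B → L) :
    sscomp (scomp f α) g = sscomp f (rscomp α g) := by
  unfold sscomp scomp rscomp
  simp only [iSup_mul' res hres, mul_iSup' res hres, mul_assoc]
  exact iSup_comm

lemma scomp_rcomp (f : A → L) (α : A → B → L) (β : B → C → L) :
    scomp (scomp f α) β = scomp f (rcomp α β) := by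
  funext c
  unfold scomp rcomp
  simp only [iSup_mul' res hres, mul_iSup' res hres, mul_assoc]
  exact iSup_comm

lemma rscomp_rcomp (α : A → B → L) (β : B → C → L) (g : C → L) :
    rscomp (rcomp α β) g = rscomp α (rscomp β g) := by
  funext a
  unfold rscomp rcomp
  simp only [iSup_mul' res hres, mul_iSup' res hres, mul_assoc]
  exact iSup_comm

lemma rscomp_eqRel (g : A → L) : rscomp (eqRel A) g = g := by
  funext a
  unfold rscomp eqRel
  apply le_antisymm
  · refine iSup_le fun b => ?_
    rw [iSup_mul' res hres]
    exact iSup_le fun h => by rw [one_mul, h]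
  · calc g a = (⨆ _ : a = a, (1 : L)) * g a := by simp
    _ ≤ _ := le_iSup (fun b => (⨆ _ : a = b, (1 : L)) * g b) a

lemma scomp_eqRel_s17 (f : A → L) : scomp f (eqRel A) = f := by
  funext a
  unfold scomp eqRel
  apply le_antisymm
  · refine iSup_le fun b => ?_
    rw [mul_iSup' res hres]
    exact iSup_le fun h => by rw [mul_one, h]
  · calc f a = f a * ⨆ _ : a = a, (1 : L) := by simp
    _ ≤ _ := le_iSup (fun b => f b * ⨆ _ : b = a, (1 : L)) a

lemma scomp_mono {f g : A → L} (α : A → B → L) (h : f ≤ g) :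
    scomp f α ≤ scomp g α :=
  fun b => iSup_mono fun a => mul_mono_left res hres (h a) _

lemma sscomp_mono_left {f g : A → L} (t : A → L) (h : f ≤ g) :
    sscomp f t ≤ sscomp g t :=
  iSup_mono fun a => mul_mono_left res hres (h a) _

lemma sscomp_mono_right (f : A → L) {s t : A → L} (h : s ≤ t) :
    sscomp f s ≤ sscomp f t :=
  iSup_mono fun a => mul_mono_right res hres _ (h a)

variable {X : Type*}

omit res hres in
lemma phiFam_append (σ : A → L) (δ : X → A → A → L) (φ : A → A → L)
    (u : List X) (x : X) :
    phiFam σ δ φ (u ++ [x]) = scomp (scomp (phiFam σ δ φ u) (δ x)) φ := by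
  unfold phiFam
  rw [List.foldl_append]
  rfl

omit res hres in
lemma scomp_le_phiFam (σ : A → L) (δ : X → A → A → L) {φ : A → A → L}
    (hrefl : IsRefl φ) (f : A → L) : f ≤ scomp f φ := by
  intro b
  calc f b = f b * φ b b := by rw [hrefl b, mul_one]
  _ ≤ _ := le_iSup (fun a => f a * φ a b) b

lemma rcomp_assoc {D : Type*} (α : A → B → L) (β : B → C → L) (γ : C → D → L) :
    rcomp (rcomp α β) γ = rcomp α (rcomp β γ) := by
  funext a d
  unfold rcomp
  simp only [iSup_mul' res hres, mul_iSup' res hres, mul_assoc]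
  exact iSup_comm

lemma rcomp_eqRel_left (α : A → B → L) : rcomp (eqRel A) α = α := by
  funext a b
  unfold rcomp eqRel
  apply le_antisymm
  · refine iSup_le fun c => ?_
    rw [iSup_mul' res hres]
    exact iSup_le fun h => by rw [one_mul, h]
  · calc α a b = (⨆ _ : a = a, (1 : L)) * α a b := by simp
    _ ≤ _ := le_iSup (fun c => (⨆ _ : a = c, (1 : L)) * α c b) a

lemma relWord_le_phiFam (σ : A → L) (δ : X → A → A → L) {φ : A → A → L}
    (hrefl : IsRefl φ) (u : List X) :
    scomp σ (relWord δ u) ≤ phiFam σ δ φ u := by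
  induction u using List.reverseRecOn with
  | nil =>
    rw [show relWord δ ([] : List X) = eqRel A from rfl, scomp_eqRel_s17 res hres]
    exact scomp_le_phiFam σ δ hrefl σ
  | append_singleton u x ih =>
    have hrel : relWord δ (u ++ [x]) = rcomp (relWord δ u) (rcomp (δ x) (eqRel A)) := by
      clear ih
      induction u with
      | nil =>
        rw [show relWord δ ([] : List X) = eqRel A from rfl,
          rcomp_eqRel_left res hres]
        rfl
      | cons y u ihu =>
        show rcomp (δ y) (relWord δ (u ++ [x])) = _
        rw [ihu, ← rcomp_assoc res hres]
        rfl
    rw [phiFam_append σ δ φ u x, hrel, ← scomp_rcomp res hres, ← scomp_rcomp res hres,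
      scomp_eqRel_s17 res hres]
    calc scomp (scomp σ (relWord δ u)) (δ x)
        ≤ scomp (phiFam σ δ φ u) (δ x) := scomp_mono res hres (δ x) ih
    _ ≤ scomp (scomp (phiFam σ δ φ u) (δ x)) φ :=
          scomp_le_phiFam σ δ hrefl (scomp (phiFam σ δ φ u) (δ x))

end Aux

lemma key_le {L : Type*} [CompleteLattice L] [CommMonoid L]
    (res : L → L → L) (hres : ∀ x y z : L, x * y ≤ z ↔ x ≤ res y z)
    {A X : Type*} (σ : A → L) (δ : X → A → A → L) (τ : A → L)
    (φ : A → A → L)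
    (hwri : ∀ u : List X, rscomp φ (rscomp (relWord δ u) τ) ≤ rscomp (relWord δ u) τ) :
    ∀ u w : List X, sscomp (phiFam σ δ φ u) (rscomp (relWord δ w) τ)
      ≤ sscomp (scomp σ (relWord δ (u ++ w))) τ := by
  intro u
  induction u using List.reverseRecOn with
  | nil =>
    intro w
    show sscomp (scomp σ φ) _ ≤ _
    rw [sscomp_rscomp res hres, List.nil_append, sscomp_rscomp res hres]
    exact sscomp_mono_right res hres σ (hwri w)
  | append_singleton u x ih =>
    intro w
    rw [phiFam_append σ δ φ u x, sscomp_rscomp res hres, sscomp_rscomp res hres]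
    calc sscomp (phiFam σ δ φ u) (rscomp (δ x) (rscomp φ (rscomp (relWord δ w) τ)))
        ≤ sscomp (phiFam σ δ φ u) (rscomp (δ x) (rscomp (relWord δ w) τ)) := by
          refine sscomp_mono_right res hres _ fun a => ?_
          exact iSup_mono fun b => mul_mono_right res hres _ (hwri w b)
    _ = sscomp (phiFam σ δ φ u) (rscomp (relWord δ (x :: w)) τ) := by
          rw [show relWord δ (x :: w) = rcomp (δ x) (relWord δ w) from rfl,
            rscomp_rcomp res hres]
    _ ≤ sscomp (scomp σ (relWord δ (u ++ x :: w))) τ := ih (x :: w)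
    _ = _ := by rw [List.append_cons]

/-- the children automaton A_φ^c is well defined
(φ_u^c = φ_v^c implies φ_{ux}^c = φ_{vx}^c), every state is accessible, and
A_φ^c is equivalent to A: its terminal membership after u, namely φ_u∘τ,
equals ⟦A⟧(u) = σ∘δ_u∘τ. -/
theorem stmt17 {L : Type*} [CompleteLattice L] [CommMonoid L] (res : L → L → L) (hres : ∀ x y z : L, x * y ≤ z ↔ x ≤ res y z) (htop : ∀ x : L, x ≤ 1)
    {A X : Type*} (σ : A → L) (δ : X → A → A → L) (τ : A → L)
    (φ : A → A → L) (hrefl : IsRefl φ)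
    (hwri : ∀ u : List X, rscomp φ (rscomp (relWord δ u) τ) ≤ rscomp (relWord δ u) τ) :
    (∀ u v : List X, childTuple σ δ φ τ u = childTuple σ δ φ τ v →
      ∀ x : X, childTuple σ δ φ τ (u ++ [x]) = childTuple σ δ φ τ (v ++ [x])) ∧
    (∀ s : {p : (X → (A → L)) × L // ∃ u : List X, p = childTuple σ δ φ τ u},
      ∃ u : List X, s.1 = childTuple σ δ φ τ u) ∧
    (∀ u : List X, sscomp (phiFam σ δ φ u) τ = sscomp (scomp σ (relWord δ u)) τ) := by
  refine ⟨?_, fun s => s.2, ?_⟩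
  · intro u v h x
    have hfst : ∀ y : X, phiFam σ δ φ (u ++ [y]) = phiFam σ δ φ (v ++ [y]) := by
      intro y
      exact congrFun (congrArg Prod.fst h) y
    unfold childTuple
    refine Prod.ext ?_ ?_
    · funext y
      show phiFam σ δ φ ((u ++ [x]) ++ [y]) = phiFam σ δ φ ((v ++ [x]) ++ [y])
      rw [phiFam_append σ δ φ (u ++ [x]) y, phiFam_append σ δ φ (v ++ [x]) y, hfst x]
    · show sscomp (phiFam σ δ φ (u ++ [x])) τ = sscomp (phiFam σ δ φ (v ++ [x])) τ
      rw [hfst x]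
  · intro u
    apply le_antisymm
    · have hτ : rscomp (relWord δ ([] : List X)) τ = τ := rscomp_eqRel res hres τ
      have := key_le res hres σ δ τ φ hwri u []
      rwa [hτ, List.append_nil] at this
    · exact sscomp_mono_left res hres τ (relWord_le_phiFam res hres σ δ hrefl u)
end FuzzyAut
end
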